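/- arXiv:2401.04714 — 3 statements merged into one kernel-verified Lean document; each statement's English description precedes it below -/
import Mathlib

section
/- In any packing of a list of items by the Best-Fit algorithm, at any point in time, there are at most 2 bins that contain no item of size greater than 1/2 and have load at most 2/3. -/
open scoped Classical

/-- One step of Best-Fit: the item `x` is placed into a fullest bin where it fits,
and a new bin is opened only if it fits nowhere. Bins are represented by the lists of
(sizes of) items they contain. -/
inductive BFStep : List (List ℝ) → ℝ → List (List ℝ) → Prop where
  | place (l₁ l₂ : List (List ℝ)) (b : List ℝ) (x : ℝ)
      (hfit : b.sum + x ≤ 1)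
      (hmax : ∀ b' ∈ l₁ ++ b :: l₂, b'.sum + x ≤ 1 → b'.sum ≤ b.sum) :
      BFStep (l₁ ++ b :: l₂) x (l₁ ++ (x :: b) :: l₂)
  | new (bins : List (List ℝ)) (x : ℝ)
      (hno : ∀ b ∈ bins, ¬ (b.sum + x ≤ 1)) :
      BFStep bins x ([x] :: bins)

/-- `BFReaches items bins`: processing the list `items` (in order) from the empty
configuration by Best-Fit can yield the configuration `bins`. -/
inductive BFReaches : List ℝ → List (List ℝ) → Prop where
  | nil : BFReaches [] []
  | cons (items : List ℝ) (x : ℝ) (s t : List (List ℝ)) :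
      BFReaches items s → BFStep s x t → BFReaches (items ++ [x]) t

/-!
Call a bin *small* if all its items are at most `1/2` and its load is at most `2/3`.
Bins are listed newest first. The invariant is that the small bins form either at most one
bin, or exactly two bins `[x₀], c` with `x₀ + load c > 1`. As sizes are positive, a bin that
is not small never becomes small, so apart from the two cases below the small bins can only
disappear.

Opening a small bin `[x]` next to a small bin `[x₀]` is impossible, since `x + x₀ ≤ 1`
means `x` would have fitted; next to a single small bin `c` it creates the pair `[x], c`,
where `x` did not fit into `c`. Putting an item `x` into `[x₀]` while keeping it small forces
`x₀ > 1/3` and `x < 1/3`, so `x` also fits into `c`, and Best-Fit's choice of `[x₀]` gives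
`load c ≤ x₀ ≤ 1/2`, contradicting `x₀ + load c > 1`.
-/

namespace BestFit

noncomputable def isSmall : List ℝ → Bool :=
  fun b => decide ((∀ y ∈ b, y ≤ (1:ℝ)/2) ∧ b.sum ≤ 2/3)

lemma isSmall_iff {b : List ℝ} :
    isSmall b ↔ (∀ y ∈ b, y ≤ (1:ℝ)/2) ∧ b.sum ≤ 2/3 := by
  simp [isSmall]

lemma isSmall_of_cons {x : ℝ} {b : List ℝ} (hx : 0 < x) (h : isSmall (x :: b)) :
    isSmall b := by
  rw [isSmall_iff, List.sum_cons] at *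
  exact ⟨fun y hy => h.1 y (List.mem_cons_of_mem x hy), by linarith [h.2]⟩

def SmallBinsInv (l : List (List ℝ)) : Prop :=
  l.length ≤ 1 ∨ ∃ x₀ c, l = [[x₀], c] ∧ 1 < x₀ + c.sum

lemma SmallBinsInv.length_le_two {l : List (List ℝ)} (h : SmallBinsInv l) : l.length ≤ 2 := by
  rcases h with h | ⟨x₀, c, rfl, -⟩
  · omega
  · rfl

lemma SmallBinsInv.sublist {l l' : List (List ℝ)} (h : SmallBinsInv l) (hl : l'.Sublist l) :
    SmallBinsInv l' := by
  by_cases hl' : l'.length ≤ 1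
  · exact Or.inl hl'
  rcases h with h | h
  · exact absurd (hl.length_le.trans h) hl'
  · obtain ⟨x₀, c, rfl, hc⟩ := h
    rw [hl.eq_of_length_le (by simp only [List.length_cons, List.length_nil] at hl' ⊢; omega)]
    exact Or.inr ⟨x₀, c, rfl, hc⟩

lemma smallBinsInv_place {l₁ l₂ : List (List ℝ)} {b : List ℝ} {x : ℝ} (hx : 0 < x)
    (hmax : ∀ b' ∈ l₁ ++ b :: l₂, b'.sum + x ≤ 1 → b'.sum ≤ b.sum)
    (h : SmallBinsInv ((l₁ ++ b :: l₂).filter isSmall)) :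
    SmallBinsInv ((l₁ ++ (x :: b) :: l₂).filter isSmall) := by
  by_cases hxb : isSmall (x :: b)
  case neg =>
    refine h.sublist ?_
    rw [List.filter_append, List.filter_append, List.filter_cons_of_neg hxb]
    exact ((List.sublist_cons_self b l₂).filter isSmall).append_left _
  have hb := isSmall_of_cons hx hxb
  simp only [List.filter_append, List.filter_cons, hxb, hb, if_true] at h ⊢
  rcases h with h | ⟨x₀, c, h, hc⟩
  · exact Or.inl (by simpa using h)
  generalize l₁.filter isSmall = A at h ⊢
  generalize hC : l₂.filter isSmall = C at h ⊢
  rcases A with _ | ⟨a, A⟩ <;>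
    simp only [List.nil_append, List.cons_append, List.cons.injEq, List.append_eq_singleton_iff,
      reduceCtorEq, and_false, or_false] at h
  · obtain ⟨rfl, rfl⟩ := h
    obtain ⟨hcl₂, hc_small⟩ := List.mem_filter.1 (hC ▸ List.mem_singleton_self c)
    have hc_load := (isSmall_iff.1 hc_small).2
    obtain ⟨hxx₀, hload⟩ := isSmall_iff.1 hxb
    have hx₀ : x₀ ≤ 1/2 := hxx₀ x₀ (by simp)
    simp only [List.sum_cons, List.sum_nil] at hload
    have hcx₀ : c.sum ≤ x₀ := by
      simpa using hmax c (by simp [hcl₂]) (by linarith)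
    linarith
  · obtain ⟨rfl, rfl, rfl, rfl⟩ := h
    exact Or.inr ⟨x₀, x :: b, rfl, by rw [List.sum_cons]; linarith⟩

lemma smallBinsInv_new {s : List (List ℝ)} {x : ℝ} (hno : ∀ b ∈ s, ¬ b.sum + x ≤ 1)
    (h : SmallBinsInv (s.filter isSmall)) : SmallBinsInv (([x] :: s).filter isSmall) := by
  by_cases hX : isSmall [x]
  case neg => simpa [List.filter_cons, hX] using h
  have hx : x ≤ 1/2 := (isSmall_iff.1 hX).1 x (by simp)
  rw [List.filter_cons_of_pos hX]
  rcases h with h | ⟨x₀, c, h, -⟩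
  · rcases hF : s.filter isSmall with _ | ⟨c, _ | ⟨c', F⟩⟩ <;> rw [hF] at h
    · exact Or.inl (by simp)
    · have hc : c ∈ s := List.mem_of_mem_filter (p := isSmall) (by simp [hF])
      exact Or.inr ⟨x, c, rfl, by linarith [hno c hc]⟩
    · simp at h
  · have hx₀ : [x₀] ∈ s.filter isSmall := by simp [h]
    obtain ⟨hx₀s, hx₀small⟩ := List.mem_filter.1 hx₀
    have hx₀half : x₀ ≤ 1/2 := (isSmall_iff.1 hx₀small).1 x₀ (by simp)
    exact (hno [x₀] hx₀s (by rw [List.sum_singleton]; linarith)).elim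

lemma smallBinsInv_of_reaches {items : List ℝ} {bins : List (List ℝ)}
    (h : BFReaches items bins) (hpos : ∀ x ∈ items, 0 < x) :
    SmallBinsInv (bins.filter isSmall) := by
  induction h with
  | nil => exact Or.inl (by simp)
  | cons items x s t _ hstep ih =>
    have hs := ih fun y hy => hpos y (List.mem_append_left _ hy)
    cases hstep with
    | place l₁ l₂ b x _ hmax => exact smallBinsInv_place (hpos x (by simp)) hmax hs
    | new _ _ hno => exact smallBinsInv_new hno hs

end BestFit

/-- In any Best-Fit packing, at any point in time, there are at most 2 bins that contain
no item of size greater than 1/2 and have load at most 2/3. -/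
theorem stmt2 (items : List ℝ) (hitems : ∀ x ∈ items, 0 < x ∧ x ≤ 1)
    (bins : List (List ℝ)) (h : BFReaches items bins) :
    (bins.filter (fun b => decide ((∀ y ∈ b, y ≤ (1:ℝ)/2) ∧ b.sum ≤ 2/3))).length ≤ 2 :=
  (BestFit.smallBinsInv_of_reaches h fun x hx => (hitems x hx).1).length_le_two
end

section
/- Let X₁,…,Xₘ be a sample of size m drawn uniformly without replacement from a finite multiset of n reals all lying in [a,b]. Then for all λ > 0, P(|Σᵢ Xᵢ − E[Σᵢ Xᵢ]| ≥ λ) ≤ 2·exp(−2λ²/(m(b−a)²)). -/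
/-!
Chernoff's method. With `w = exp (t * x)`, the exponential of `t` times the sample sum is
`∏ k ∈ S, w (σ k)`. Averaged over permutations `σ`, such a product of nonnegative weights is at
most `(mean of w) ^ #S`, its value for sampling with replacement: adding one position `i ∉ S` at a
time, the swap symmetry of a uniform permutation makes position `i` look like any position outside
`S` and no larger, in the mean, than any position inside `S` (a sum-of-squares argument).
Hoeffding's lemma bounds the mean of `w` by `exp (t μ + t² (b - a)² / 8)`, and
`t = 4 λ / (m (b - a)²)` optimizes the resulting bound.
-/

open Finset Real MeasureTheory ProbabilityTheory

lemma integral_uniformOn_univ {ι : Type*} [Fintype ι] [MeasurableSpace ι]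
    [MeasurableSingletonClass ι] (f : ι → ℝ) :
    ∫ i, f i ∂(uniformOn Set.univ) = (∑ i, f i) / Fintype.card ι := by
  simp [uniformOn, ProbabilityTheory.cond, integral_smul_measure, div_eq_inv_mul]

lemma sum_exp_mul_le_of_mem_Icc {ι : Type*} [Fintype ι] [Nonempty ι] {x : ι → ℝ} {a b : ℝ}
    (hx : ∀ i, x i ∈ Set.Icc a b) (t : ℝ) :
    ∑ i, exp (t * x i) ≤
      Fintype.card ι * exp (t * ((∑ i, x i) / Fintype.card ι) + t ^ 2 * (b - a) ^ 2 / 8) := by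
  let _ : MeasurableSpace ι := ⊤
  set μ := (∑ i, x i) / Fintype.card ι
  have hmean : ∫ i, x i ∂(uniformOn Set.univ) = μ := integral_uniformOn_univ x
  have hoeffding := (hasSubgaussianMGF_of_mem_Icc (μ := uniformOn Set.univ)
    (Measurable.of_discrete (f := x)).aemeasurable (ae_of_all _ hx)).mgf_le t
  have hcard : (0 : ℝ) < Fintype.card ι := by exact_mod_cast Fintype.card_pos
  have hvar : (((‖b - a‖₊ / 2) ^ 2 : NNReal) : ℝ) * t ^ 2 / 2 = t ^ 2 * (b - a) ^ 2 / 8 := by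
    norm_num [div_pow]; ring
  rw [mgf, integral_uniformOn_univ, hmean, div_le_iff₀ hcard, hvar] at hoeffding
  calc ∑ i, exp (t * x i) = exp (t * μ) * ∑ i, exp (t * (x i - μ)) := by
        rw [mul_sum]; congr! 1 with i; rw [← exp_add]; ring_nf
    _ ≤ exp (t * μ) * (exp (t ^ 2 * (b - a) ^ 2 / 8) * Fintype.card ι) := by gcongr
    _ = _ := by rw [exp_add]; ring

namespace Equiv.Perm

variable {α : Type*} [Fintype α] [DecidableEq α]

lemma sum_mul_prod_swap (F : α → α → ℝ) (w : α → ℝ) {S : Finset α} {i j : α}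
    (hi : i ∉ S) (hj : j ∉ S) :
    ∑ σ : Perm α, F (σ i) (σ j) * ∏ k ∈ S, w (σ k) =
      ∑ σ : Perm α, F (σ j) (σ i) * ∏ k ∈ S, w (σ k) := by
  rw [← Equiv.sum_comp (Equiv.mulRight (swap i j))]
  refine sum_congr rfl fun σ _ => ?_
  simp only [coe_mulRight, mul_apply, swap_apply_left, swap_apply_right]
  congr 1
  refine prod_congr rfl fun k hk => ?_
  rw [swap_apply_of_ne_of_ne (ne_of_mem_of_not_mem hk hi) (ne_of_mem_of_not_mem hk hj)]

lemma sum_mul_prod_le_of_mem {w : α → ℝ} (hw : ∀ k, 0 ≤ w k) {S : Finset α} {i j : α}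
    (hi : i ∉ S) (hj : j ∈ S) :
    ∑ σ : Perm α, w (σ i) * ∏ k ∈ S, w (σ k) ≤ ∑ σ : Perm α, w (σ j) * ∏ k ∈ S, w (σ k) := by
  set P : Perm α → ℝ := fun σ => ∏ k ∈ S.erase j, w (σ k)
  have hsplit (σ : Perm α) : ∏ k ∈ S, w (σ k) = w (σ j) * P σ := (mul_prod_erase S _ hj).symm
  have hswap := sum_mul_prod_swap (fun u v => (w v - w u) * w v) w
    (fun h => hi (mem_of_mem_erase h)) (notMem_erase j S)
  -- the two symmetric halves add up to a sum of squares
  have hsq : 0 ≤ ∑ σ : Perm α, ((w (σ j) - w (σ i)) * w (σ j) * P σ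
      + (w (σ i) - w (σ j)) * w (σ i) * P σ) :=
    sum_nonneg fun σ _ => by
      have : 0 ≤ P σ := prod_nonneg fun k _ => hw _
      nlinarith [mul_nonneg (sq_nonneg (w (σ j) - w (σ i))) this]
  simp only [sum_add_distrib] at hsq
  have hdiff : ∑ σ : Perm α, w (σ j) * ∏ k ∈ S, w (σ k) - ∑ σ : Perm α, w (σ i) * ∏ k ∈ S, w (σ k)
      = ∑ σ : Perm α, (w (σ j) - w (σ i)) * w (σ j) * P σ := by
    rw [← sum_sub_distrib]
    exact sum_congr rfl fun σ _ => by rw [hsplit]; ring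
  linarith

lemma card_mul_sum_prod_insert_le {w : α → ℝ} (hw : ∀ k, 0 ≤ w k) {S : Finset α} {i : α}
    (hi : i ∉ S) :
    Fintype.card α * ∑ σ : Perm α, ∏ k ∈ insert i S, w (σ k) ≤
      (∑ k, w k) * ∑ σ : Perm α, ∏ k ∈ S, w (σ k) := by
  have hexpand : (∑ k, w k) * ∑ σ : Perm α, ∏ k ∈ S, w (σ k) =
      ∑ j, ∑ σ : Perm α, w (σ j) * ∏ k ∈ S, w (σ k) := by
    rw [sum_comm, mul_sum]
    refine sum_congr rfl fun σ _ => ?_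
    rw [sum_mul]
    exact (Equiv.sum_comp σ (fun k => w k * ∏ l ∈ S, w (σ l))).symm
  have hterm (j : α) : ∑ σ : Perm α, w (σ i) * ∏ k ∈ S, w (σ k) ≤
      ∑ σ : Perm α, w (σ j) * ∏ k ∈ S, w (σ k) := by
    by_cases hj : j ∈ S
    · exact sum_mul_prod_le_of_mem hw hi hj
    · exact (sum_mul_prod_swap (fun u _ => w u) w hi hj).le
  simp only [prod_insert hi]
  rw [hexpand, ← nsmul_eq_mul, ← card_univ]
  exact card_nsmul_le_sum _ _ _ fun j _ => hterm j

lemma sum_prod_le_card_mul_pow {w : α → ℝ} (hw : ∀ k, 0 ≤ w k) (S : Finset α) :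
    ∑ σ : Perm α, ∏ k ∈ S, w (σ k) ≤
      Fintype.card (Perm α) * ((∑ k, w k) / Fintype.card α) ^ #S := by
  induction S using Finset.induction_on with
  | empty => simp
  | insert i S hi ih =>
    have hα : (0 : ℝ) < Fintype.card α := by exact_mod_cast Fintype.card_pos_iff.2 ⟨i⟩
    rw [card_insert_of_notMem hi, pow_succ, ← mul_le_mul_iff_of_pos_left hα]
    calc _ ≤ (∑ k, w k) * ∑ σ : Perm α, ∏ k ∈ S, w (σ k) := card_mul_sum_prod_insert_le hw hi
      _ ≤ (∑ k, w k) * (Fintype.card (Perm α) * ((∑ k, w k) / Fintype.card α) ^ #S) :=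
        mul_le_mul_of_nonneg_left ih (sum_nonneg fun k _ => hw k)
      _ = _ := by field_simp

end Equiv.Perm

lemma card_filter_mul_exp_le_sum_exp {β : Type*} (s : Finset β) (f : β → ℝ) {t lam : ℝ}
    (ht : 0 ≤ t) :
    #(s.filter fun y => lam ≤ f y) * exp (t * lam) ≤ ∑ y ∈ s, exp (t * f y) := by
  rw [← nsmul_eq_mul]
  calc _ ≤ ∑ y ∈ s.filter (fun y => lam ≤ f y), exp (t * f y) :=
        card_nsmul_le_sum _ _ _ fun y hy => exp_le_exp.2 <| by gcongr; exact (mem_filter.1 hy).2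
    _ ≤ _ := sum_le_sum_of_subset_of_nonneg (filter_subset _ _) fun y _ _ => (exp_pos _).le

section SamplingWithoutReplacement

variable {α : Type*} [Fintype α] [DecidableEq α]

lemma sum_perm_exp_mul_sum_le [Nonempty α] {x : α → ℝ} {a b : ℝ}
    (hx : ∀ i, x i ∈ Set.Icc a b) (t : ℝ) (S : Finset α) :
    ∑ σ : Equiv.Perm α, exp (t * ∑ k ∈ S, x (σ k)) ≤ Fintype.card (Equiv.Perm α) *
      exp (#S * (t * ((∑ i, x i) / Fintype.card α) + t ^ 2 * (b - a) ^ 2 / 8)) := by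
  have hα : (0 : ℝ) < Fintype.card α := by exact_mod_cast Fintype.card_pos
  simp only [mul_sum, exp_sum]
  calc _ ≤ Fintype.card (Equiv.Perm α) * ((∑ i, exp (t * x i)) / Fintype.card α) ^ #S :=
        Equiv.Perm.sum_prod_le_card_mul_pow (fun i => (exp_pos _).le) S
    _ ≤ _ := by
        rw [exp_nat_mul]
        gcongr
        rw [div_le_iff₀ hα, mul_comm]
        exact sum_exp_mul_le_of_mem_Icc hx t

lemma card_sum_sub_ge_le (x : α → ℝ) {a b lam : ℝ} (hx : ∀ i, x i ∈ Set.Icc a b)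
    (hlam : 0 ≤ lam) (S : Finset α) :
    #(univ.filter fun σ : Equiv.Perm α =>
        lam ≤ ∑ k ∈ S, x (σ k) - #S * (∑ i, x i) / Fintype.card α) ≤
      Fintype.card (Equiv.Perm α) * exp (-2 * lam ^ 2 / (#S * (b - a) ^ 2)) := by
  by_cases hD : (#S : ℝ) * (b - a) ^ 2 = 0
  · -- the bound is then `card * exp 0`, since `x / 0 = 0`
    rw [hD, div_zero, exp_zero, mul_one]
    exact_mod_cast card_filter_le _ _
  have : Nonempty α := by
    obtain ⟨i, -⟩ := card_ne_zero.1 (by exact_mod_cast left_ne_zero_of_mul hD : #S ≠ 0)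
    exact ⟨i⟩
  set μ := (∑ i, x i) / Fintype.card α
  set t := 4 * lam / (#S * (b - a) ^ 2)
  have ht : 0 ≤ t := div_nonneg (by positivity) (by positivity)
  refine le_of_mul_le_mul_right ?_ (exp_pos (t * lam))
  calc _ ≤ ∑ σ : Equiv.Perm α,
          exp (t * (∑ k ∈ S, x (σ k) - (#S : ℝ) * (∑ i, x i) / Fintype.card α)) :=
        card_filter_mul_exp_le_sum_exp univ _ ht
    _ = exp (-(t * #S * μ)) * ∑ σ : Equiv.Perm α, exp (t * ∑ k ∈ S, x (σ k)) := by
        rw [mul_sum univ (fun σ : Equiv.Perm α => _)]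
        refine sum_congr rfl fun σ _ => ?_
        rw [← exp_add]; congr 1; simp only [μ]; ring
    _ ≤ exp (-(t * #S * μ)) * (Fintype.card (Equiv.Perm α) *
          exp (#S * (t * μ + t ^ 2 * (b - a) ^ 2 / 8))) := by
        gcongr; exact sum_perm_exp_mul_sum_le hx t S
    _ = _ := by
        rw [mul_left_comm, ← exp_add, mul_assoc (Fintype.card (Equiv.Perm α) : ℝ), ← exp_add]
        congr 2
        simp only [t]
        field_simp
        ring

lemma card_abs_sum_sub_ge_div_le (x : α → ℝ) {a b lam : ℝ} (hx : ∀ i, x i ∈ Set.Icc a b)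
    (hlam : 0 ≤ lam) (S : Finset α) :
    (#(univ.filter fun σ : Equiv.Perm α =>
        lam ≤ |∑ k ∈ S, x (σ k) - #S * (∑ i, x i) / Fintype.card α|) : ℝ) /
        Fintype.card (Equiv.Perm α) ≤
      2 * exp (-2 * lam ^ 2 / (#S * (b - a) ^ 2)) := by
  have hupper := card_sum_sub_ge_le x hx hlam S
  have hlower := card_sum_sub_ge_le (fun i => -x i) (a := -b) (b := -a)
    (fun i => ⟨neg_le_neg (hx i).2, neg_le_neg (hx i).1⟩) hlam S
  have hneg : (univ.filter fun σ : Equiv.Perm α =>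
      lam ≤ ∑ k ∈ S, -x (σ k) - #S * (∑ i, -x i) / Fintype.card α) =
      univ.filter fun σ : Equiv.Perm α =>
        lam ≤ -(∑ k ∈ S, x (σ k) - #S * (∑ i, x i) / Fintype.card α) :=
    filter_congr fun σ _ => by simp only [sum_neg_distrib]; ring_nf
  rw [hneg, show (-a - -b) ^ 2 = (b - a) ^ 2 by ring] at hlower
  rw [div_le_iff₀ (by exact_mod_cast Fintype.card_pos), filter_congr fun σ _ => le_abs,
    filter_or]
  calc _ ≤ (#(univ.filter fun σ : Equiv.Perm α =>
          lam ≤ ∑ k ∈ S, x (σ k) - #S * (∑ i, x i) / Fintype.card α) : ℝ) +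
        #(univ.filter fun σ : Equiv.Perm α =>
          lam ≤ -(∑ k ∈ S, x (σ k) - #S * (∑ i, x i) / Fintype.card α)) := by
        exact_mod_cast card_union_le _ _
    _ ≤ _ := by linarith

end SamplingWithoutReplacement

theorem stmt11_general (n m : ℕ) (hm : m ≤ n)
    (a b lam : ℝ) (hlam : 0 < lam)
    (x : Fin n → ℝ) (hx : ∀ i, a ≤ x i ∧ x i ≤ b) :
    ((Finset.univ.filter (fun σ : Equiv.Perm (Fin n) =>
        lam ≤ |(∑ i : Fin m, x (σ (Fin.castLE hm i))) - (m : ℝ) * (∑ i, x i) / n|)).card : ℝ)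
      / (Fintype.card (Equiv.Perm (Fin n)) : ℝ) ≤
    2 * Real.exp (-2 * lam ^ 2 / (m * (b - a) ^ 2)) := by
  have h := card_abs_sum_sub_ge_div_le x hx hlam.le (univ.map (Fin.castLEEmb hm))
  simp only [sum_map, card_map, card_univ, Fintype.card_fin, Fin.castLEEmb_apply] at h
  exact h

/-- Hoeffding's inequality for sampling without replacement: the sample of size `m` is
obtained by applying a uniformly random permutation `σ` to the population `x : Fin n → ℝ`
(all values in `[a,b]`) and taking the first `m` entries. The probability (over the uniform
choice of `σ`) that the sample sum deviates from its mean `m·(∑ x)/n` by at least `lam` is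
at most `2·exp(−2·lam²/(m(b−a)²))`. -/
theorem stmt11 (n m : ℕ) (hm : m ≤ n) (hn : 0 < n)
    (a b lam : ℝ) (hlam : 0 < lam)
    (x : Fin n → ℝ) (hx : ∀ i, a ≤ x i ∧ x i ≤ b) :
    ((Finset.univ.filter (fun σ : Equiv.Perm (Fin n) =>
        lam ≤ |(∑ i : Fin m, x (σ (Fin.castLE hm i))) - (m : ℝ) * (∑ i, x i) / n|)).card : ℝ)
      / (Fintype.card (Equiv.Perm (Fin n)) : ℝ) ≤
    2 * Real.exp (-2 * lam ^ 2 / (m * (b - a) ^ 2)) :=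
  stmt11_general n m hm a b lam hlam x hx
end

section
/- For the specific Best-Fit packing rule restricted to items of size 1/4 and 1/3 into unit bins, where a bin is closed once its load exceeds 3/4, at any point in time there are at most two open bins, and the possible configurations of open bin loads are exactly: none; a single bin of load 1/4, 1/3, 1/2, 7/12, 2/3, or 3/4; or two bins with loads (3/4, 1/3) or (3/4, 2/3). -/
/-! Best-Fit is deterministic: from no bin, one bin, or two bins of distinct loads, the next
configuration is an explicit function of the item size. The nine listed configurations are
closed under both item sizes, and each is reached from the empty one by a short explicit
sequence of arrivals. -/

open scoped Classical

/-- One step of Best-Fit on items of size 1/4 and 1/3: a state is the multiset of loads of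
the open bins (a bin is closed, i.e., removed, once its load exceeds 3/4). The item is
placed into a fullest open bin where it fits; a new bin is opened only if it fits nowhere. -/
inductive MStep : Multiset ℝ → ℝ → Multiset ℝ → Prop where
  | place (s : Multiset ℝ) (x L : ℝ) (hL : L ∈ s) (hfit : L + x ≤ 1)
      (hmax : ∀ L' ∈ s, L' + x ≤ 1 → L' ≤ L) :
      MStep s x (s.erase L + (if L + x ≤ 3/4 then {L + x} else 0))
  | new (s : Multiset ℝ) (x : ℝ) (hno : ∀ L ∈ s, ¬ (L + x ≤ 1)) :
      MStep s x (s + (if x ≤ 3/4 then {x} else 0))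

/-- The configurations of open bins reachable from the empty configuration by arrivals of
items of size 1/4 or 1/3. -/
inductive MReach : Multiset ℝ → Prop where
  | init : MReach 0
  | step (s t : Multiset ℝ) (x : ℝ) (hx : x = 1/4 ∨ x = 1/3) :
      MReach s → MStep s x t → MReach t

noncomputable def openBin (y : ℝ) : Multiset ℝ := if y ≤ 3/4 then {y} else 0

def IsBestFitConfig (s : Multiset ℝ) : Prop :=
  s = 0 ∨ s = {1/4} ∨ s = {1/3} ∨ s = {1/2} ∨ s = {7/12} ∨ s = {2/3} ∨ s = {3/4} ∨
    s = {3/4, 1/3} ∨ s = {3/4, 2/3}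

section MStep

variable {a b x : ℝ} {t : Multiset ℝ}

theorem mStep_zero_iff : MStep 0 x t ↔ t = openBin x := by
  constructor
  · rintro (⟨L, hL⟩ | _)
    · exact absurd hL (Multiset.notMem_zero L)
    · exact zero_add _
  · rintro rfl
    simpa [openBin] using MStep.new 0 x (by simp)

theorem mStep_singleton_iff :
    MStep {a} x t ↔ t = if a + x ≤ 1 then openBin (a + x) else {a} + openBin x := by
  constructor
  · rintro (⟨L, hL, hfit⟩ | hno)
    · rw [Multiset.mem_singleton] at hL
      subst hL
      simp [hfit, openBin]
    · simp [hno, openBin]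
  · rintro rfl
    split_ifs with hfit
    · have h := MStep.place {a} x a (Multiset.mem_singleton_self a) hfit (by simp)
      rwa [Multiset.erase_singleton, zero_add] at h
    · exact MStep.new {a} x (by simpa using hfit)

theorem mStep_pair_iff (hba : b < a) :
    MStep {a, b} x t ↔ t =
      if a + x ≤ 1 then {b} + openBin (a + x)
      else if b + x ≤ 1 then {a} + openBin (b + x)
      else {a, b} + openBin x := by
  have hab : a ≠ b := hba.ne'
  constructor
  · rintro (⟨L, hL, hfit, hmax⟩ | hno)
    · simp only [Multiset.insert_eq_cons, Multiset.mem_cons, Multiset.mem_singleton] at hL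
      rcases hL with rfl | rfl
      · simp [hfit, openBin]
      · have ha : ¬ a + x ≤ 1 := fun ha => hba.not_ge (hmax a (by simp) ha)
        simp [ha, hfit, openBin, Multiset.erase_cons_tail _ hab]
    · simp [hno, openBin]
  · rintro rfl
    split_ifs with ha hb
    · have h := MStep.place {a, b} x a (by simp) ha (by simp [hba.le])
      simpa [openBin] using h
    · have h := MStep.place {a, b} x b (by simp) hb (by simp [ha])
      simpa [openBin, Multiset.erase_cons_tail _ hab] using h
    · exact MStep.new {a, b} x (by simp [not_le.mp ha, not_le.mp hb])

end MStep

theorem IsBestFitConfig.of_mStep {s t : Multiset ℝ} {x : ℝ} (hs : IsBestFitConfig s)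
    (hx : x = 1/4 ∨ x = 1/3) (h : MStep s x t) : IsBestFitConfig t := by
  rcases hs with rfl | rfl | rfl | rfl | rfl | rfl | rfl | rfl | rfl <;>
  first
  | rw [mStep_zero_iff] at h
  | rw [mStep_singleton_iff] at h
  | rw [mStep_pair_iff (by norm_num)] at h
  all_goals
    rcases hx with rfl | rfl <;> subst h <;>
    norm_num [IsBestFitConfig, openBin, Multiset.insert_eq_cons, Multiset.singleton_add]

theorem IsBestFitConfig.mReach {s : Multiset ℝ} (hs : IsBestFitConfig s) : MReach s := by
  have h14 : MReach {1/4} :=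
    .step _ _ (1/4) (by norm_num) .init (mStep_zero_iff.mpr (by norm_num [openBin]))
  have h13 : MReach {1/3} :=
    .step _ _ (1/3) (by norm_num) .init (mStep_zero_iff.mpr (by norm_num [openBin]))
  have h12 : MReach {1/2} :=
    .step _ _ (1/4) (by norm_num) h14 (mStep_singleton_iff.mpr (by norm_num [openBin]))
  have h712 : MReach {7/12} :=
    .step _ _ (1/3) (by norm_num) h14 (mStep_singleton_iff.mpr (by norm_num [openBin]))
  have h23 : MReach {2/3} :=
    .step _ _ (1/3) (by norm_num) h13 (mStep_singleton_iff.mpr (by norm_num [openBin]))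
  have h34 : MReach {3/4} :=
    .step _ _ (1/4) (by norm_num) h12 (mStep_singleton_iff.mpr (by norm_num [openBin]))
  have h34_13 : MReach {3/4, 1/3} :=
    .step _ _ (1/3) (by norm_num) h34 (mStep_singleton_iff.mpr
      (by norm_num [openBin, Multiset.insert_eq_cons, Multiset.singleton_add]))
  have h34_23 : MReach {3/4, 2/3} :=
    .step _ _ (1/3) (by norm_num) h34_13 ((mStep_pair_iff (by norm_num)).mpr
      (by norm_num [openBin, Multiset.insert_eq_cons, Multiset.singleton_add]))
  rcases hs with rfl | rfl | rfl | rfl | rfl | rfl | rfl | rfl | rfl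
  exacts [.init, h14, h13, h12, h712, h23, h34, h34_13, h34_23]

theorem MReach.isBestFitConfig {s : Multiset ℝ} (h : MReach s) : IsBestFitConfig s := by
  induction h with
  | init => exact Or.inl rfl
  | step _ _ _ hx _ hstep ih => exact ih.of_mStep hx hstep

theorem IsBestFitConfig.card_le_two {s : Multiset ℝ} (hs : IsBestFitConfig s) :
    Multiset.card s ≤ 2 := by
  rcases hs with rfl | rfl | rfl | rfl | rfl | rfl | rfl | rfl | rfl <;> simp

/-- For Best-Fit on items of size 1/4 and 1/3 (bins closed once their load exceeds 3/4),
at any point in time there are at most two open bins, and the reachable open-bin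
configurations are exactly: none; a single bin of load 1/4, 1/3, 1/2, 7/12, 2/3 or 3/4;
or two bins with loads (3/4, 1/3) or (3/4, 2/3). -/
theorem stmt15 : ∀ s : Multiset ℝ,
    (MReach s ↔
      (s = 0 ∨ s = {1/4} ∨ s = {1/3} ∨ s = {1/2} ∨ s = {7/12} ∨ s = {2/3} ∨ s = {3/4} ∨
        s = {3/4, 1/3} ∨ s = {3/4, 2/3})) ∧
    (MReach s → Multiset.card s ≤ 2) := fun _ =>
  ⟨⟨MReach.isBestFitConfig, IsBestFitConfig.mReach⟩,
    fun h => h.isBestFitConfig.card_le_two⟩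
end
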